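/- Let v : ℝ → ℝ² → ℝ² and φ : ℝ → ℝ² → ℝ² be infinitely differentiable jointly in time and space with φ(0, ·) = id, with φ(t, ·) : ℝ² → ℝ² a bijection for every t, and such that for all x and t the derivative of s ↦ φ(s, x) at t equals v(t, φ(t, x)). Let V ⊆ ℝ² be compact and measurable, and let f : ℝ → ℝ² → ℝ be infinitely differentiable jointly in time and space. Then the function t ↦ ∫_{φ(t,·)''V} f(t, x) dx is infinitely differentiable on ℝ. -/

import Mathlib

open MeasureTheory Metric
open scoped ContDiff

noncomputable section MovingAux

abbrev E2 := EuclideanSpace ℝ (Fin 2)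

/-- spatial partial Fréchet derivative of a time-dependent map -/
def pfd (g : ℝ → E2 → E2) (p : ℝ × E2) : E2 →L[ℝ] E2 :=
  (fderiv ℝ (fun q : ℝ × E2 => g q.1 q.2) p).comp (ContinuousLinearMap.inr ℝ ℝ E2)

def ee (i : Fin 2) : E2 := EuclideanSpace.single i 1

def ent (g : ℝ → E2 → E2) (i j : Fin 2) (p : ℝ × E2) : ℝ := pfd g p (ee j) i

lemma hasFDerivAt_tx (t : ℝ) (x : E2) :
    HasFDerivAt (fun y : E2 => ((t : ℝ), y)) (ContinuousLinearMap.inr ℝ ℝ E2) x := by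
  have h := (hasFDerivAt_const (𝕜 := ℝ) t x).prodMk (hasFDerivAt_id x)
  exact h

lemma pfd_hasFDerivAt {g : ℝ → E2 → E2}
    (hg : ContDiff ℝ ∞ (fun q : ℝ × E2 => g q.1 q.2)) (t : ℝ) (x : E2) :
    HasFDerivAt (g t) (pfd g (t, x)) x :=
  ((hg.differentiable (by simp) (t, x)).hasFDerivAt).comp x (hasFDerivAt_tx t x)

lemma contDiff_pfd {g : ℝ → E2 → E2}
    (hg : ContDiff ℝ ∞ (fun q : ℝ × E2 => g q.1 q.2)) :
    ContDiff ℝ ∞ (pfd g) :=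
  (hg.fderiv_right (by simp)).clm_comp contDiff_const

lemma contDiff_ent {g : ℝ → E2 → E2}
    (hg : ContDiff ℝ ∞ (fun q : ℝ × E2 => g q.1 q.2)) (i j : Fin 2) :
    ContDiff ℝ ∞ (ent g i j) :=
  (EuclideanSpace.proj i : E2 →L[ℝ] ℝ).contDiff.comp
    ((contDiff_pfd hg).clm_apply contDiff_const)

lemma ee_decomp (z : E2) : z = z 0 • ee 0 + z 1 • ee 1 := by
  ext i
  fin_cases i <;> simp [ee, EuclideanSpace.single_apply]


section Var
variable {v φ : ℝ → E2 → E2}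

lemma fact1 (hφ : ContDiff ℝ ∞ (fun p : ℝ × E2 => φ p.1 p.2))
    (hode : ∀ (x : E2) (t : ℝ), HasDerivAt (fun s => φ s x) (v t (φ t x)) t)
    (t : ℝ) (x : E2) :
    fderiv ℝ (fun q : ℝ × E2 => φ q.1 q.2) (t, x) (1, 0) = v t (φ t x) := by
  have hcurve : HasDerivAt (fun s : ℝ => (s, x)) ((1 : ℝ), (0 : E2)) t :=
    (hasDerivAt_id t).prodMk (hasDerivAt_const t x)
  have h1 : HasDerivAt (fun s => φ s x)
      (fderiv ℝ (fun q : ℝ × E2 => φ q.1 q.2) (t, x) (1, 0)) t :=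
    by have h := ((hφ.differentiable (by simp) (t, x)).hasFDerivAt).comp_hasDerivAt t hcurve; exact h
  exact h1.unique (hode x t)

lemma ent_ode (hv : ContDiff ℝ ∞ (fun p : ℝ × E2 => v p.1 p.2))
    (hφ : ContDiff ℝ ∞ (fun p : ℝ × E2 => φ p.1 p.2))
    (hode : ∀ (x : E2) (t : ℝ), HasDerivAt (fun s => φ s x) (v t (φ t x)) t)
    (i j : Fin 2) (x : E2) (t : ℝ) :
    HasDerivAt (fun s => ent φ i j (s, x))
      (ent φ 0 j (t, x) * ent v i 0 (t, φ t x)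
        + ent φ 1 j (t, x) * ent v i 1 (t, φ t x)) t := by
  set Φ : ℝ × E2 → E2 := fun q => φ q.1 q.2 with hΦdef
  set w : ℝ → E2 → E2 := fun t x => v t (φ t x) with hwdef
  have hwc : ContDiff ℝ ∞ (fun q : ℝ × E2 => w q.1 q.2) := hv.comp (contDiff_fst.prodMk hφ)
  have hG : ContDiff ℝ ∞ (fderiv ℝ Φ) := hφ.fderiv_right (by simp)
  have hcurve : HasDerivAt (fun s : ℝ => (s, x)) ((1 : ℝ), (0 : E2)) t :=
    (hasDerivAt_id t).prodMk (hasDerivAt_const t x)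
  have h1 : HasDerivAt (fun s => fderiv ℝ Φ (s, x))
      (fderiv ℝ (fderiv ℝ Φ) (t, x) (1, 0)) t :=
    ((hG.differentiable (by simp) (t, x)).hasFDerivAt).comp_hasDerivAt t hcurve
  have h2 : HasDerivAt (fun s => fderiv ℝ Φ (s, x) ((0 : ℝ), ee j))
      (fderiv ℝ (fderiv ℝ Φ) (t, x) (1, 0) ((0 : ℝ), ee j)) t := by
    have h := h1.clm_apply (hasDerivAt_const t (((0 : ℝ), ee j) : ℝ × E2))
    simpa using h
  have hsymm : fderiv ℝ (fderiv ℝ Φ) (t, x) (1, 0) ((0 : ℝ), ee j)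
      = fderiv ℝ (fderiv ℝ Φ) (t, x) ((0 : ℝ), ee j) (1, 0) :=
    (hφ.contDiffAt.isSymmSndFDerivAt (by simp; exact WithTop.coe_le_coe.2 le_top)) _ _
  have h3 : fderiv ℝ (fun q => fderiv ℝ Φ q (1, 0)) (t, x)
      = (fderiv ℝ (fderiv ℝ Φ) (t, x)).flip (1, 0) := by
    rw [fderiv_clm_apply (hG.differentiable (by simp) (t, x)) (differentiableAt_const _)]
    simp
  have h4 : (fun q : ℝ × E2 => fderiv ℝ Φ q (1, 0)) = fun q : ℝ × E2 => w q.1 q.2 := by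
    funext q
    exact fact1 hφ hode q.1 q.2
  have h5 : HasDerivAt (fun s => fderiv ℝ Φ (s, x) ((0 : ℝ), ee j))
      (pfd w (t, x) (ee j)) t := by
    convert h2 using 1
    rw [hsymm]
    have he : pfd w (t, x) (ee j)
        = fderiv ℝ (fun q : ℝ × E2 => w q.1 q.2) (t, x) ((0 : ℝ), ee j) := rfl
    rw [he, ← h4, h3]
    rfl
  have h6 : pfd w (t, x) = (pfd v (t, φ t x)).comp (pfd φ (t, x)) := by
    have ha : HasFDerivAt (w t) ((pfd v (t, φ t x)).comp (pfd φ (t, x))) x :=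
      (pfd_hasFDerivAt hv t (φ t x)).comp x (pfd_hasFDerivAt hφ t x)
    exact (pfd_hasFDerivAt hwc t x).unique ha
  have h7 : HasDerivAt (fun s => ent φ i j (s, x))
      ((pfd v (t, φ t x)) (pfd φ (t, x) (ee j)) i) t := by
    have h := ((EuclideanSpace.proj i : E2 →L[ℝ] ℝ).hasFDerivAt).comp_hasDerivAt t h5
    rw [h6] at h
    exact h
  have h8 : ∀ (L : E2 →L[ℝ] E2) (z : E2) (i : Fin 2),
      L z i = z 0 * L (ee 0) i + z 1 * L (ee 1) i := by
    intro L z i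
    conv_lhs => rw [ee_decomp z]
    rw [map_add, _root_.map_smul, _root_.map_smul]
    simp [smul_eq_mul]
  have h9 : (pfd v (t, φ t x)) (pfd φ (t, x) (ee j)) i
      = ent φ 0 j (t, x) * ent v i 0 (t, φ t x)
        + ent φ 1 j (t, x) * ent v i 1 (t, φ t x) := by
    rw [h8 (pfd v (t, φ t x)) (pfd φ (t, x) (ee j)) i]
    rfl
  rw [← h9]
  exact h7

end Var

section Det
variable {v φ : ℝ → E2 → E2}

def dd (φ : ℝ → E2 → E2) (p : ℝ × E2) : ℝ :=
  ent φ 0 0 p * ent φ 1 1 p - ent φ 0 1 p * ent φ 1 0 p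

lemma contDiff_dd (hφ : ContDiff ℝ ∞ (fun p : ℝ × E2 => φ p.1 p.2)) :
    ContDiff ℝ ∞ (dd φ) :=
  ((contDiff_ent hφ 0 0).mul (contDiff_ent hφ 1 1)).sub
    ((contDiff_ent hφ 0 1).mul (contDiff_ent hφ 1 0))

lemma dd_zero (hφ : ContDiff ℝ ∞ (fun p : ℝ × E2 => φ p.1 p.2))
    (hφ0 : φ 0 = id) (x : E2) : dd φ (0, x) = 1 := by
  have hid : pfd φ (0, x) = ContinuousLinearMap.id ℝ E2 := by
    have h1 := pfd_hasFDerivAt hφ 0 x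
    rw [hφ0] at h1
    exact h1.unique (hasFDerivAt_id x)
  simp [dd, ent, hid, ee, EuclideanSpace.single_apply]

lemma dd_pos (hv : ContDiff ℝ ∞ (fun p : ℝ × E2 => v p.1 p.2))
    (hφ : ContDiff ℝ ∞ (fun p : ℝ × E2 => φ p.1 p.2))
    (hφ0 : φ 0 = id)
    (hode : ∀ (x : E2) (t : ℝ), HasDerivAt (fun s => φ s x) (v t (φ t x)) t)
    (x : E2) (t : ℝ) : 0 < dd φ (t, x) := by
  set trc : ℝ → ℝ := fun s => ent v 0 0 (s, φ s x) + ent v 1 1 (s, φ s x) with htrc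
  have h1 : Continuous fun s : ℝ => (s, φ s x) := by
    have := hφ.continuous
    fun_prop
  have htrcc : Continuous trc :=
    (((contDiff_ent hv 0 0).continuous.comp h1).add
      (((contDiff_ent hv 1 1).continuous).comp h1))
  have hδ : ∀ s, HasDerivAt (fun r => dd φ (r, x)) (trc s * dd φ (s, x)) s := by
    intro s
    have h00 := ent_ode hv hφ hode 0 0 x s
    have h01 := ent_ode hv hφ hode 0 1 x s
    have h10 := ent_ode hv hφ hode 1 0 x s
    have h11 := ent_ode hv hφ hode 1 1 x s
    have h := ((h00.mul h11).sub (h01.mul h10))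
    refine h.congr_deriv ?_
    simp only [dd, htrc]
    ring
  set Eint : ℝ → ℝ := fun s => ∫ r in (0:ℝ)..s, trc r with hEint
  have hE : ∀ s, HasDerivAt Eint (trc s) s := fun s =>
    intervalIntegral.integral_hasDerivAt_right (htrcc.intervalIntegrable _ _)
      (htrcc.stronglyMeasurableAtFilter _ _) htrcc.continuousAt
  have hh : ∀ s, HasDerivAt (fun r => dd φ (r, x) * Real.exp (-Eint r)) 0 s := by
    intro s
    have h := (hδ s).mul (((hE s).neg).exp)
    refine h.congr_deriv ?_
    ring
  have hconst : dd φ (t, x) * Real.exp (-Eint t) = dd φ (0, x) * Real.exp (-Eint 0) :=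
    is_const_of_deriv_eq_zero (fun s => (hh s).differentiableAt) (fun s => (hh s).deriv) t 0
  rw [dd_zero hφ hφ0 x] at hconst
  have hE0 : Eint 0 = 0 := intervalIntegral.integral_same
  rw [hE0] at hconst
  simp only [neg_zero, Real.exp_zero, one_mul] at hconst
  nlinarith [Real.exp_pos (-Eint t)]

lemma det_eq_dd (p : ℝ × E2) : (pfd φ p).det = dd φ p := by
  have hb := LinearMap.det_toMatrix (EuclideanSpace.basisFun (Fin 2) ℝ).toBasis
    ((pfd φ p) : E2 →ₗ[ℝ] E2)
  rw [ContinuousLinearMap.det, ← hb, Matrix.det_fin_two]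
  simp only [LinearMap.toMatrix_apply, OrthonormalBasis.coe_toBasis,
    OrthonormalBasis.coe_toBasis_repr_apply, OrthonormalBasis.repr_self]
  simp [EuclideanSpace.basisFun_apply, EuclideanSpace.basisFun_repr, dd, ent, ee,
    ContinuousLinearMap.coe_coe]

end Det


lemma contDiff_param_integral {V : Set E2} (hVc : IsCompact V)
    {F : ℝ × E2 → ℝ} (hF : ContDiff ℝ ∞ F) :
    ContDiff ℝ ∞ (fun t => ∫ y in V, F (t, y)) := by
  rw [contDiff_infty]
  intro n
  induction n generalizing F with
  | zero =>
    exact contDiff_zero.2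
      (continuous_parametric_integral_of_continuous (f := fun t y => F (t, y))
        (by exact hF.continuous) hVc)
  | succ n ih =>
    have hFd : ContDiff ℝ ∞ (fun p => fderiv ℝ F p) := hF.fderiv_right (by simp)
    have hDF : ContDiff ℝ ∞ (fun p : ℝ × E2 => fderiv ℝ F p (1, 0)) :=
      hFd.clm_apply contDiff_const
    have hder : ∀ (y : E2) (t : ℝ),
        HasDerivAt (fun s => F (s, y)) (fderiv ℝ F (t, y) (1, 0)) t := by
      intro y t
      have h1 : HasDerivAt (fun s : ℝ => (s, y)) ((1 : ℝ), (0 : E2)) t :=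
        (hasDerivAt_id t).prodMk (hasDerivAt_const t y)
      exact ((hF.differentiable (by simp) (t, y)).hasFDerivAt).comp_hasDerivAt t h1
    have key : ∀ t₀ : ℝ, HasDerivAt (fun t => ∫ y in V, F (t, y))
        (∫ y in V, fderiv ℝ F (t₀, y) (1, 0)) t₀ := by
      intro t₀
      obtain ⟨C, hC⟩ :=
        ((isCompact_closedBall t₀ 1).prod hVc).exists_bound_of_continuousOn
          (hDF.continuous.continuousOn)
      have hFc := hF.continuous
      have hDFc := hDF.continuous
      refine (hasDerivAt_integral_of_dominated_loc_of_deriv_le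
        (F := fun t y => F (t, y)) (F' := fun t y => fderiv ℝ F (t, y) (1, 0))
        (ball_mem_nhds t₀ one_pos)
        (Filter.Eventually.of_forall fun t =>
          (Continuous.aestronglyMeasurable (by fun_prop)))
        (((by fun_prop : Continuous fun y => F (t₀, y))).continuousOn.integrableOn_compact hVc)
        (Continuous.aestronglyMeasurable (by fun_prop))
        (bound := fun _ => |C|) ?_ ?_ ?_).2
      · rw [MeasureTheory.ae_restrict_iff' hVc.measurableSet]
        refine Filter.Eventually.of_forall fun y hy => fun t ht => ?_
        exact (hC (t, y) ⟨ball_subset_closedBall ht, hy⟩).trans (le_abs_self C)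
      · exact integrableOn_const hVc.measure_lt_top.ne
      · exact Filter.Eventually.of_forall fun y => fun t _ => hder y t
    have hcast : ((n + 1 : ℕ) : WithTop ℕ∞) = (n : WithTop ℕ∞) + 1 := by push_cast; rfl
    rw [hcast, contDiff_succ_iff_deriv]
    refine ⟨fun t => (key t).differentiableAt, by simp, ?_⟩
    have : deriv (fun t => ∫ y in V, F (t, y))
        = fun t => ∫ y in V, (fun p : ℝ × E2 => fderiv ℝ F p (1, 0)) (t, y) := by
      funext t; exact (key t).deriv
    rw [this]
    exact ih hDF

end MovingAux

/-- For a compact measurable region `V ⊆ ℝ²` transported by the flow `φ` of a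
smooth velocity field `v`, and a smooth density `f`, the moving-domain
integral `t ↦ ∫_{φ(t,·)''V} f(t,x) dx` is infinitely differentiable in time. -/
theorem moving_integral_smooth
    (v φ : ℝ → EuclideanSpace ℝ (Fin 2) → EuclideanSpace ℝ (Fin 2))
    (hv : ContDiff ℝ ∞ (fun p : ℝ × EuclideanSpace ℝ (Fin 2) => v p.1 p.2))
    (hφ : ContDiff ℝ ∞ (fun p : ℝ × EuclideanSpace ℝ (Fin 2) => φ p.1 p.2))
    (hφ0 : φ 0 = id)
    (hbij : ∀ t, Function.Bijective (φ t))
    (hode : ∀ (x : EuclideanSpace ℝ (Fin 2)) (t : ℝ),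
      HasDerivAt (fun s => φ s x) (v t (φ t x)) t)
    (V : Set (EuclideanSpace ℝ (Fin 2)))
    (hVc : IsCompact V) (hVm : MeasurableSet V)
    (f : ℝ → EuclideanSpace ℝ (Fin 2) → ℝ)
    (hf : ContDiff ℝ ∞ (fun p : ℝ × EuclideanSpace ℝ (Fin 2) => f p.1 p.2)) :
    ContDiff ℝ ∞ (fun t => ∫ x in φ t '' V, f t x) := by
  have hBf : ∀ t : ℝ, ∀ y ∈ V, HasFDerivWithinAt (φ t) (pfd φ (t, y)) V y :=
    fun t y _ => (pfd_hasFDerivAt hφ t y).hasFDerivWithinAt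
  have hchg : ∀ t : ℝ, (∫ x in φ t '' V, f t x)
      = ∫ y in V, dd φ (t, y) * f t (φ t y) := by
    intro t
    rw [integral_image_eq_integral_abs_det_fderiv_smul volume hVm (hBf t)
      ((hbij t).injective.injOn) (f t)]
    congr 1
    funext y
    rw [det_eq_dd, abs_of_pos (dd_pos hv hφ hφ0 hode y t), smul_eq_mul]
  have hF : ContDiff ℝ ∞ (fun p : ℝ × E2 => dd φ p * f p.1 (φ p.1 p.2)) :=
    (contDiff_dd hφ).mul (hf.comp (contDiff_fst.prodMk hφ))
  have heq : (fun t => ∫ x in φ t '' V, f t x)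
      = fun t => ∫ y in V, (fun p : ℝ × E2 => dd φ p * f p.1 (φ p.1 p.2)) (t, y) := by
    funext t; exact hchg t
  rw [heq]
  exact contDiff_param_integral hVc hF
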